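/- arXiv:1110.1836 — 3 statements merged into one kernel-verified Lean document; each statement's English description precedes it below -/
import Mathlib

section
/- The set C = {(x, y) ∈ ℝ × ℝ : y² = x³ − x} is a nonempty subset of ℝ² (it contains (0,0)) that is not preconnected; that is, the real affine plane curve y² = x³ − x is disconnected. -/
/-- The real affine plane curve `y² = x³ − x` is a nonempty subset of `ℝ²`
(containing `(0,0)`) which is not preconnected, i.e. it is disconnected. -/
theorem real_elliptic_curve_disconnected :
    ((0, 0) : ℝ × ℝ) ∈ {p : ℝ × ℝ | p.2 ^ 2 = p.1 ^ 3 - p.1} ∧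
    ({p : ℝ × ℝ | p.2 ^ 2 = p.1 ^ 3 - p.1}).Nonempty ∧
    ¬ IsPreconnected {p : ℝ × ℝ | p.2 ^ 2 = p.1 ^ 3 - p.1} := by
  refine ⟨by norm_num, ⟨(0, 0), by norm_num⟩, ?_⟩
  intro h
  have hU : IsOpen {p : ℝ × ℝ | p.1 < (1:ℝ)/2} :=
    isOpen_lt continuous_fst continuous_const
  have hV : IsOpen {p : ℝ × ℝ | (1:ℝ)/2 < p.1} :=
    isOpen_lt continuous_const continuous_fst
  have hcov : {p : ℝ × ℝ | p.2 ^ 2 = p.1 ^ 3 - p.1} ⊆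
      {p : ℝ × ℝ | p.1 < (1:ℝ)/2} ∪ {p : ℝ × ℝ | (1:ℝ)/2 < p.1} := by
    intro p hp
    rcases lt_trichotomy p.1 ((1:ℝ)/2) with h1 | h1 | h1
    · exact Or.inl h1
    · exfalso
      simp only [Set.mem_setOf_eq] at hp
      rw [h1] at hp
      nlinarith [sq_nonneg p.2]
    · exact Or.inr h1
  obtain ⟨q, hq, hq1, hq2⟩ := h _ _ hU hV hcov
    ⟨(0, 0), by norm_num, by norm_num⟩
    ⟨(1, 0), by norm_num, by norm_num⟩
  simp only [Set.mem_setOf_eq] at hq1 hq2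
  linarith
end

section
/- The set C₁ = {(x, y) ∈ ℝ × ℝ : y² = x³ − x and −1 ≤ x ≤ 0} is nonempty, compact, and connected as a subset of ℝ². -/
/-!
Over a set `s` on which `f ≥ 0`, the locus `y² = f x` is the union of the graphs of `√f` and
`-√f`. Both graphs are continuous images of `s`, so the locus is compact when `s` is; when `s` is
connected and `f` vanishes somewhere on `s`, the two graphs meet on the `x`-axis and the locus is
connected. For the oval take `f x = x³ - x = (-x)(1 - x)(x + 1)` on `[-1, 0]`, which vanishes at
both endpoints.
-/

open Set

theorem setOf_sq_eq_and_mem_eq_union {f : ℝ → ℝ} {s : Set ℝ} (hf : ∀ x ∈ s, 0 ≤ f x) :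
    {p : ℝ × ℝ | p.2 ^ 2 = f p.1 ∧ p.1 ∈ s} =
      (fun x => (x, √(f x))) '' s ∪ (fun x => (x, -√(f x))) '' s := by
  ext ⟨x, y⟩
  simp only [mem_ofPred_eq, mem_union, mem_image, Prod.mk.injEq]
  constructor
  · rintro ⟨hy, hx⟩
    have hsqrt : √(f x) = |y| := by rw [← hy, Real.sqrt_sq_eq_abs]
    rcases le_or_gt 0 y with hy0 | hy0
    · exact Or.inl ⟨x, hx, rfl, by rw [hsqrt, abs_of_nonneg hy0]⟩
    · exact Or.inr ⟨x, hx, rfl, by rw [hsqrt, abs_of_neg hy0, neg_neg]⟩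
  · rintro (⟨x, hx, rfl, rfl⟩ | ⟨x, hx, rfl, rfl⟩)
    · exact ⟨Real.sq_sqrt (hf x hx), hx⟩
    · exact ⟨by rw [neg_sq, Real.sq_sqrt (hf x hx)], hx⟩

theorem isCompact_setOf_sq_eq_and_mem {f : ℝ → ℝ} {s : Set ℝ} (hs : IsCompact s)
    (hfc : ContinuousOn f s) (hf : ∀ x ∈ s, 0 ≤ f x) :
    IsCompact {p : ℝ × ℝ | p.2 ^ 2 = f p.1 ∧ p.1 ∈ s} := by
  rw [setOf_sq_eq_and_mem_eq_union hf]
  exact (hs.image_of_continuousOn (by fun_prop)).union (hs.image_of_continuousOn (by fun_prop))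

theorem isConnected_setOf_sq_eq_and_mem {f : ℝ → ℝ} {s : Set ℝ} (hs : IsPreconnected s)
    (hfc : ContinuousOn f s) (hf : ∀ x ∈ s, 0 ≤ f x) {x₀ : ℝ} (hx₀ : x₀ ∈ s) (hfx₀ : f x₀ = 0) :
    IsConnected {p : ℝ × ℝ | p.2 ^ 2 = f p.1 ∧ p.1 ∈ s} := by
  rw [setOf_sq_eq_and_mem_eq_union hf]
  have hs' : IsConnected s := ⟨⟨x₀, hx₀⟩, hs⟩
  refine IsConnected.union ⟨(x₀, 0), ?_, ?_⟩ (hs'.image _ (by fun_prop))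
    (hs'.image _ (by fun_prop))
  · exact ⟨x₀, hx₀, by simp [hfx₀]⟩
  · exact ⟨x₀, hx₀, by simp [hfx₀]⟩

/-- The oval `C₁ = {(x,y) : y² = x³ − x, −1 ≤ x ≤ 0}` of the real elliptic curve
is nonempty, compact and connected. -/
theorem real_elliptic_curve_oval_compact_connected :
    ({p : ℝ × ℝ | p.2 ^ 2 = p.1 ^ 3 - p.1 ∧ -1 ≤ p.1 ∧ p.1 ≤ 0}).Nonempty ∧
    IsCompact {p : ℝ × ℝ | p.2 ^ 2 = p.1 ^ 3 - p.1 ∧ -1 ≤ p.1 ∧ p.1 ≤ 0} ∧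
    IsConnected {p : ℝ × ℝ | p.2 ^ 2 = p.1 ^ 3 - p.1 ∧ -1 ≤ p.1 ∧ p.1 ≤ 0} := by
  have hcont : ContinuousOn (fun x : ℝ => x ^ 3 - x) (Icc (-1) 0) := by fun_prop
  have hnonneg : ∀ x ∈ Icc (-1 : ℝ) 0, 0 ≤ x ^ 3 - x := by
    rintro x ⟨hx₁, hx₂⟩
    have hfactor : x ^ 3 - x = -x * (1 - x) * (x + 1) := by ring
    rw [hfactor]
    exact mul_nonneg (mul_nonneg (by linarith) (by linarith)) (by linarith)
  exact ⟨⟨(0, 0), by norm_num⟩, isCompact_setOf_sq_eq_and_mem isCompact_Icc hcont hnonneg,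
    isConnected_setOf_sq_eq_and_mem isPreconnected_Icc hcont hnonneg
      (right_mem_Icc.2 (by norm_num)) (by norm_num)⟩
end

section
/- The set C₂ = {(x, y) ∈ ℝ × ℝ : y² = x³ − x and x ≥ 1} is nonempty, closed, connected, and unbounded as a subset of ℝ². -/
/-!
Over `x ≥ 1` the cubic `x³ − x = x (x − 1) (x + 1)` is nonnegative, so `C₂` is the union of the
graphs of `x ↦ √(x³ − x)` and `x ↦ −√(x³ − x)` over `[1, ∞)`. These are connected and meet at the
root `(1, 0)`; closedness is that of a polynomial equation and a half-plane, and unboundedness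
follows because `C₂` projects onto the unbounded ray `[1, ∞)`.
-/

open Set

def sqCurve (f : ℝ → ℝ) (s : Set ℝ) : Set (ℝ × ℝ) :=
  {p | p.2 ^ 2 = f p.1 ∧ p.1 ∈ s}

namespace sqCurve

variable {f : ℝ → ℝ} {s : Set ℝ}

theorem isClosed (hf : Continuous f) (hs : IsClosed s) : IsClosed (sqCurve f s) :=
  (isClosed_eq (by fun_prop) (by fun_prop)).inter (hs.preimage continuous_fst)

theorem eq_union_graphs (hf : ∀ x ∈ s, 0 ≤ f x) :
    sqCurve f s = (fun x ↦ (x, √(f x))) '' s ∪ (fun x ↦ (x, -√(f x))) '' s := by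
  ext ⟨x, y⟩
  simp only [sqCurve, mem_union, mem_image, Prod.mk.injEq]
  constructor
  · rintro ⟨hy, hx⟩
    have hsqrt : √(f x) = |y| := by rw [← hy, Real.sqrt_sq_eq_abs]
    rcases le_or_gt 0 y with hy0 | hy0
    · exact Or.inl ⟨x, hx, rfl, by rw [hsqrt, abs_of_nonneg hy0]⟩
    · exact Or.inr ⟨x, hx, rfl, by rw [hsqrt, abs_of_neg hy0, neg_neg]⟩
  · rintro (⟨x, hx, rfl, rfl⟩ | ⟨x, hx, rfl, rfl⟩) <;>
      simp [Real.sq_sqrt (hf x hx), hx]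

theorem image_fst (hf : ∀ x ∈ s, 0 ≤ f x) : Prod.fst '' sqCurve f s = s := by
  rw [eq_union_graphs hf, image_union, ← image_comp, ← image_comp]
  simp only [Function.comp_def, image_id', union_self]

theorem isConnected (hf : ContinuousOn f s) (hs : IsConnected s) (hf_nonneg : ∀ x ∈ s, 0 ≤ f x)
    {a : ℝ} (ha : a ∈ s) (hfa : f a = 0) : IsConnected (sqCurve f s) := by
  have hsqrt : ContinuousOn (fun x ↦ √(f x)) s := hf.sqrt
  rw [eq_union_graphs hf_nonneg]
  refine IsConnected.union ⟨(a, 0), ⟨a, ha, ?_⟩, ⟨a, ha, ?_⟩⟩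
    (hs.image _ (continuousOn_id.prodMk hsqrt)) (hs.image _ (continuousOn_id.prodMk hsqrt.neg))
  all_goals simp [hfa]

theorem not_isBounded (hf : ∀ x ∈ s, 0 ≤ f x) (hs : ¬ Bornology.IsBounded s) :
    ¬ Bornology.IsBounded (sqCurve f s) :=
  fun h ↦ hs (image_fst hf ▸ h.image_fst)

end sqCurve

theorem cube_sub_self_nonneg {x : ℝ} (hx : 1 ≤ x) : 0 ≤ x ^ 3 - x := by
  have : x ^ 3 - x = x * (x - 1) * (x + 1) := by ring
  rw [this]
  have : 0 ≤ x - 1 := by linarith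
  positivity

/-- The unbounded branch `C₂ = {(x,y) : y² = x³ − x, x ≥ 1}` of the real elliptic
curve is nonempty, closed, connected and unbounded. -/
theorem real_elliptic_curve_branch_closed_connected_unbounded :
    ({p : ℝ × ℝ | p.2 ^ 2 = p.1 ^ 3 - p.1 ∧ 1 ≤ p.1}).Nonempty ∧
    IsClosed {p : ℝ × ℝ | p.2 ^ 2 = p.1 ^ 3 - p.1 ∧ 1 ≤ p.1} ∧
    IsConnected {p : ℝ × ℝ | p.2 ^ 2 = p.1 ^ 3 - p.1 ∧ 1 ≤ p.1} ∧
    ¬ Bornology.IsBounded {p : ℝ × ℝ | p.2 ^ 2 = p.1 ^ 3 - p.1 ∧ 1 ≤ p.1} := by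
  have hC : {p : ℝ × ℝ | p.2 ^ 2 = p.1 ^ 3 - p.1 ∧ 1 ≤ p.1} =
      sqCurve (fun x ↦ x ^ 3 - x) (Ici 1) := rfl
  rw [hC]
  have hnonneg : ∀ x ∈ Ici (1 : ℝ), 0 ≤ x ^ 3 - x := fun _ ↦ cube_sub_self_nonneg
  have hconnected := sqCurve.isConnected (by fun_prop) isConnected_Ici hnonneg
    self_mem_Ici (by norm_num)
  have hIci_unbounded : ¬ Bornology.IsBounded (Ici (1 : ℝ)) :=
    fun h ↦ not_bddAbove_Ici _ h.bddAbove
  exact ⟨hconnected.nonempty, sqCurve.isClosed (by fun_prop) isClosed_Ici, hconnected,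
    sqCurve.not_isBounded hnonneg hIci_unbounded⟩
end
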